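/- arXiv:2308.09619 — 5 statements merged into one kernel-verified Lean document; each statement's English description precedes it below -/
import Mathlib

section
/- The improper integral ∫_{0}^{∞} e^{−x^2} sin(x^2)/x^2 dx equals √(π/2) · √(√2 − 1). -/
open Real MeasureTheory Set Filter Complex Topology

noncomputable section

private def gfun (x : ℝ) : ℝ := Real.exp (-x^2) * Real.sin (x^2) / x^2
private def hfun (x : ℝ) : ℝ := 2 * Real.exp (-x^2) * (Real.cos (x^2) - Real.sin (x^2))
private def Ffun (x : ℝ) : ℝ := -(Real.exp (-x^2) * Real.sin (x^2) / x)

private lemma gauss_int : Integrable (fun x : ℝ => Real.exp (-x^2)) := by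
  have := integrable_exp_neg_mul_sq (one_pos)
  simpa using this

private lemma g_meas : Measurable gfun := by
  unfold gfun; fun_prop

private lemma h_meas : Measurable hfun := by
  unfold hfun; fun_prop

private lemma g_bound {x : ℝ} (hx : 0 < x) : ‖gfun x‖ ≤ Real.exp (-x^2) := by
  unfold gfun
  rw [Real.norm_eq_abs, abs_div, abs_mul, _root_.abs_of_pos (Real.exp_pos _)]
  have h1 : |Real.sin (x^2)| ≤ x^2 := by
    have := Real.abs_sin_le_abs (x := x^2)
    rwa [_root_.abs_of_nonneg (sq_nonneg x)] at this
  have h2 : |x^2| = x^2 := _root_.abs_of_nonneg (sq_nonneg x)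
  rw [h2]
  calc Real.exp (-x^2) * |Real.sin (x^2)| / x^2
      ≤ Real.exp (-x^2) * x^2 / x^2 := by
        gcongr
      _ = Real.exp (-x^2) := by
        have : x^2 ≠ 0 := (pow_pos hx 2).ne'
        field_simp

private lemma h_bound (x : ℝ) : ‖hfun x‖ ≤ 4 * Real.exp (-x^2) := by
  unfold hfun
  rw [Real.norm_eq_abs, abs_mul, abs_mul]
  have h1 : |Real.cos (x^2) - Real.sin (x^2)| ≤ 2 := by
    have := Real.abs_cos_le_one (x^2)
    have := Real.abs_sin_le_one (x^2)
    have := abs_sub (Real.cos (x^2)) (Real.sin (x^2))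
    calc |Real.cos (x^2) - Real.sin (x^2)| ≤ |Real.cos (x^2)| + |Real.sin (x^2)| :=
      abs_sub _ _
    _ ≤ 2 := by linarith [Real.abs_cos_le_one (x^2), Real.abs_sin_le_one (x^2)]
  calc |2| * |Real.exp (-x^2)| * |Real.cos (x^2) - Real.sin (x^2)|
      ≤ |2| * |Real.exp (-x^2)| * 2 := by gcongr
    _ = 4 * Real.exp (-x^2) := by
        rw [_root_.abs_of_pos (Real.exp_pos _)]; norm_num; ring

private lemma g_int : IntegrableOn gfun (Ioi 0) := by
  apply Integrable.mono' (gauss_int.integrableOn)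
    (g_meas.aestronglyMeasurable.restrict)
  filter_upwards [ae_restrict_mem measurableSet_Ioi] with x hx
  exact g_bound hx

private lemma h_int : IntegrableOn hfun (Ioi 0) := by
  apply Integrable.mono' ((gauss_int.const_mul 4).integrableOn)
    (h_meas.aestronglyMeasurable.restrict)
  exact Eventually.of_forall fun x => h_bound x

private lemma F_deriv {x : ℝ} (hx : 0 < x) :
    HasDerivAt Ffun (gfun x - hfun x) x := by
  have hx2 : HasDerivAt (fun y : ℝ => y^2) (2*x) x := by
    simpa using hasDerivAt_pow 2 x
  have he : HasDerivAt (fun y : ℝ => Real.exp (-y^2))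
      (Real.exp (-x^2) * (-(2*x))) x := (hx2.neg.exp)
  have hs : HasDerivAt (fun y : ℝ => Real.sin (y^2))
      (Real.cos (x^2) * (2*x)) x := hx2.sin
  have hnum : HasDerivAt (fun y : ℝ => Real.exp (-y^2) * Real.sin (y^2))
      (Real.exp (-x^2) * (-(2*x)) * Real.sin (x^2)
        + Real.exp (-x^2) * (Real.cos (x^2) * (2*x))) x := he.mul hs
  have hdiv : HasDerivAt (fun y : ℝ => Real.exp (-y^2) * Real.sin (y^2) / y)
      (((Real.exp (-x^2) * (-(2*x)) * Real.sin (x^2)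
        + Real.exp (-x^2) * (Real.cos (x^2) * (2*x))) * x
        - Real.exp (-x^2) * Real.sin (x^2) * 1) / x^2) x :=
    hnum.div (hasDerivAt_id x) hx.ne'
  have := hdiv.neg
  refine this.congr_deriv ?_
  unfold gfun hfun
  have hx2ne : x^2 ≠ 0 := (pow_pos hx 2).ne'
  field_simp
  ring

private lemma F_bound {x : ℝ} (hx : 0 < x) : ‖Ffun x‖ ≤ x := by
  unfold Ffun
  rw [Real.norm_eq_abs, abs_neg, abs_div, abs_mul,
    _root_.abs_of_pos (Real.exp_pos _), _root_.abs_of_pos hx]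
  have h1 : |Real.sin (x^2)| ≤ x^2 := by
    have := Real.abs_sin_le_abs (x := x^2)
    rwa [_root_.abs_of_nonneg (sq_nonneg x)] at this
  calc Real.exp (-x^2) * |Real.sin (x^2)| / x
      ≤ 1 * x^2 / x := by
        gcongr
        · exact Real.exp_le_one_iff.2 (neg_nonpos.2 (sq_nonneg x))
      _ = x := by field_simp [hx.ne']

private lemma F_cont : ContinuousWithinAt Ffun (Ici 0) 0 := by
  have hF0 : Ffun 0 = 0 := by simp [Ffun]
  rw [ContinuousWithinAt, hF0]
  apply squeeze_zero_norm' (a := fun x : ℝ => x)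
  · filter_upwards [self_mem_nhdsWithin] with x (hx : (0:ℝ) ≤ x)
    rcases hx.eq_or_lt with rfl | hx'
    · simp [Ffun]
    · exact F_bound hx'
  · exact (continuous_id.tendsto 0).mono_left nhdsWithin_le_nhds

private lemma F_top : Tendsto Ffun atTop (𝓝 0) := by
  apply squeeze_zero_norm' (a := fun x : ℝ => x⁻¹)
  · filter_upwards [eventually_gt_atTop 0] with x hx
    unfold Ffun
    rw [Real.norm_eq_abs, abs_neg, abs_div, abs_mul,
      _root_.abs_of_pos (Real.exp_pos _), _root_.abs_of_pos hx]
    calc Real.exp (-x^2) * |Real.sin (x^2)| / x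
        ≤ 1 * 1 / x := by
          gcongr
          · exact Real.exp_le_one_iff.2 (neg_nonpos.2 (sq_nonneg x))
          · exact Real.abs_sin_le_one _
      _ = x⁻¹ := by ring
  · exact tendsto_inv_atTop_zero

private lemma step1 : ∫ x in Ioi (0:ℝ), gfun x = ∫ x in Ioi (0:ℝ), hfun x := by
  have h0 : ∫ x in Ioi (0:ℝ), (gfun x - hfun x) = 0 - Ffun 0 :=
    integral_Ioi_of_hasDerivAt_of_tendsto F_cont (fun x hx => F_deriv hx)
      (g_int.sub h_int) F_top
  have hF0 : Ffun 0 = 0 := by simp [Ffun]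
  rw [integral_sub g_int h_int, hF0, sub_zero] at h0
  linarith

private def zC : ℂ := ((π:ℂ) / (1 - Complex.I)) ^ ((1:ℂ)/2)

private lemma step2 : ∫ x in Ioi (0:ℝ), hfun x = zC.re - zC.im := by
  have hbre : (0:ℝ) < (1 - Complex.I).re := by simp
  have hint : IntegrableOn (fun x : ℝ => Complex.exp (-(1 - Complex.I) * (x:ℂ)^2)) (Ioi 0) :=
    (integrable_cexp_neg_mul_sq hbre).integrableOn
  have hS : ∫ x : ℝ in Ioi 0, Complex.exp (-(1 - Complex.I) * (x:ℂ)^2) = zC / 2 :=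
    integral_gaussian_complex_Ioi hbre
  have hre : ∀ x : ℝ, (Complex.exp (-(1 - Complex.I) * (x:ℂ)^2)).re
      = Real.exp (-x^2) * Real.cos (x^2) := by
    intro x
    rw [Complex.exp_re]
    norm_num [Complex.mul_re, Complex.mul_im, ← Complex.ofReal_pow]
  have him : ∀ x : ℝ, (Complex.exp (-(1 - Complex.I) * (x:ℂ)^2)).im
      = Real.exp (-x^2) * Real.sin (x^2) := by
    intro x
    rw [Complex.exp_im]
    norm_num [Complex.mul_re, Complex.mul_im, ← Complex.ofReal_pow]
  have h1 : ∫ x in Ioi (0:ℝ), hfun x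
      = 2 * ((∫ x in Ioi (0:ℝ), (Complex.exp (-(1 - Complex.I) * (x:ℂ)^2)).re)
          - ∫ x in Ioi (0:ℝ), (Complex.exp (-(1 - Complex.I) * (x:ℂ)^2)).im) := by
    rw [← integral_sub, ← integral_const_mul]
    · apply setIntegral_congr_fun measurableSet_Ioi
      intro x _
      simp only [hre, him]
      unfold hfun
      ring
    · exact hint.re
    · exact hint.im
  have h2 : (∫ x in Ioi (0:ℝ), (Complex.exp (-(1 - Complex.I) * (x:ℂ)^2)).re)
      = (zC / 2).re := by
    rw [← hS]
    exact integral_re hint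
  have h3 : (∫ x in Ioi (0:ℝ), (Complex.exp (-(1 - Complex.I) * (x:ℂ)^2)).im)
      = (zC / 2).im := by
    rw [← hS]
    exact integral_im hint
  rw [h1, h2, h3]
  simp [Complex.div_re, Complex.div_im, Complex.normSq]
  ring


private lemma sqrt2_ge_one : (1:ℝ) ≤ Real.sqrt 2 := by
  rw [show (1:ℝ) = Real.sqrt 1 by simp]
  exact Real.sqrt_le_sqrt (by norm_num)

private def pR : ℝ := Real.sqrt (π * (Real.sqrt 2 + 1) / 4)
private def qR : ℝ := Real.sqrt (π * (Real.sqrt 2 - 1) / 4)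

private lemma pR_sq : pR ^ 2 = π * (Real.sqrt 2 + 1) / 4 :=
  Real.sq_sqrt (by positivity)

private lemma qR_sq : qR ^ 2 = π * (Real.sqrt 2 - 1) / 4 := by
  apply Real.sq_sqrt
  have h := sqrt2_ge_one
  have := pi_pos
  nlinarith

private lemma pq_mul : pR * qR = π / 4 := by
  unfold pR qR
  rw [← Real.sqrt_mul (by positivity)]
  have h : π * (Real.sqrt 2 + 1) / 4 * (π * (Real.sqrt 2 - 1) / 4) = (π / 4) ^ 2 := by
    have h2 : Real.sqrt 2 ^ 2 = 2 := Real.sq_sqrt (by norm_num)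
    nlinarith [h2]
  rw [h, Real.sqrt_sq (by positivity)]

private lemma u_eq : (π:ℂ) / (1 - Complex.I) = Complex.mk (π/2) (π/2) := by
  have hne : (1 - Complex.I) ≠ 0 := by
    intro h
    have := congrArg Complex.im h
    simp at this
  rw [div_eq_iff hne]
  apply Complex.ext <;>
    simp [Complex.mul_re, Complex.mul_im, Complex.sub_re, Complex.sub_im]

private lemma u_ne : ((π:ℂ) / (1 - Complex.I)) ≠ 0 := by
  rw [u_eq]
  intro h
  have := congrArg Complex.re h
  simp at this

private lemma zC_sq : zC ^ 2 = (π:ℂ) / (1 - Complex.I) := by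
  have h : ((1:ℂ)/2) = ((2:ℕ):ℂ)⁻¹ := by norm_num
  unfold zC
  rw [h]
  exact Complex.cpow_nat_inv_pow _ two_ne_zero

private lemma zC_re_pos : 0 < zC.re := by
  unfold zC
  rw [Complex.cpow_def_of_ne_zero u_ne]
  rw [Complex.exp_re]
  apply mul_pos (Real.exp_pos _)
  have harg : |Complex.arg ((π:ℂ) / (1 - Complex.I))| < π / 2 := by
    apply Complex.abs_arg_lt_pi_div_two_iff.2
    left
    rw [u_eq]
    simp [pi_pos]
  have him : (Complex.log ((π:ℂ) / (1 - Complex.I)) * (1/2)).im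
      = Complex.arg ((π:ℂ) / (1 - Complex.I)) / 2 := by
    simp [Complex.mul_im, Complex.log_im]
    ring
  rw [him]
  apply Real.cos_pos_of_mem_Ioo
  constructor
  · cases abs_lt.1 harg; linarith
  · cases abs_lt.1 harg; linarith

private lemma zC_eq : zC = Complex.mk pR qR := by
  have hp : 0 < pR := Real.sqrt_pos.2 (by positivity)
  have hv : (Complex.mk pR qR) ^ 2 = (π:ℂ) / (1 - Complex.I) := by
    rw [u_eq, sq]
    apply Complex.ext
    · show (Complex.mk pR qR * Complex.mk pR qR).re = (Complex.mk (π/2) (π/2)).re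
      rw [Complex.mul_re]
      show pR * pR - qR * qR = π / 2
      have := pR_sq; have := qR_sq
      nlinarith
    · show (Complex.mk pR qR * Complex.mk pR qR).im = (Complex.mk (π/2) (π/2)).im
      rw [Complex.mul_im]
      show pR * qR + qR * pR = π / 2
      have := pq_mul
      nlinarith
  have hzero : (zC - Complex.mk pR qR) * (zC + Complex.mk pR qR) = 0 := by
    have h := zC_sq
    rw [← hv] at h
    ring_nf
    linear_combination h
  rcases mul_eq_zero.1 hzero with h | h
  · exact sub_eq_zero.1 h
  · exfalso
    have h2 : zC = -Complex.mk pR qR := eq_neg_of_add_eq_zero_left h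
    have := zC_re_pos
    rw [h2] at this
    simp at this
    linarith

end

open Real MeasureTheory
theorem stmt8 :
    ∫ x in Set.Ioi (0:ℝ), Real.exp (-x^2) * Real.sin (x^2) / x^2
      = Real.sqrt (π/2) * Real.sqrt (Real.sqrt 2 - 1) := by
  have h1 : ∫ x in Set.Ioi (0:ℝ), Real.exp (-x^2) * Real.sin (x^2) / x^2
      = ∫ x in Set.Ioi (0:ℝ), gfun x := rfl
  rw [h1, step1, step2, zC_eq]
  show pR - qR = Real.sqrt (π/2) * Real.sqrt (Real.sqrt 2 - 1)
  have h2 := sqrt2_ge_one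
  have hq : 0 ≤ qR := Real.sqrt_nonneg _
  have hpq : qR ≤ pR := by
    apply Real.sqrt_le_sqrt
    nlinarith [pi_pos]
  rw [← Real.sqrt_mul (by positivity : (0:ℝ) ≤ π/2)]
  have h3 : pR - qR = Real.sqrt ((pR - qR)^2) := (Real.sqrt_sq (by linarith)).symm
  rw [h3]
  congr 1
  have := pR_sq; have := qR_sq; have := pq_mul
  nlinarith
end

section
/- For every real β ≥ 0, ∫_{0}^{∞} e^{−x^2} sin(β x^2)/x^2 dx = √(π/2) · √(√(1 + β^2) − 1). -/
open Real MeasureTheory Complex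

namespace Stmt9Aux

lemma ofReal_mul_cpow {r : ℝ} (hr : 0 < r) {z : ℂ} (hz : z ≠ 0) (s : ℂ) :
    ((r:ℂ) * z) ^ s = (r:ℂ) ^ s * z ^ s := by
  have hr' : (r:ℂ) ≠ 0 := ofReal_ne_zero.mpr hr.ne'
  rw [Complex.cpow_def_of_ne_zero (mul_ne_zero hr' hz),
    Complex.log_ofReal_mul hr hz, add_mul, Complex.exp_add,
    Complex.ofReal_log hr.le,
    ← Complex.cpow_def_of_ne_zero hr', ← Complex.cpow_def_of_ne_zero hz]

lemma im_sqrt (β : ℝ) (hβ : 0 ≤ β) :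
    (((1:ℂ) - β*I) ^ ((1:ℂ)/2)).im = - Real.sqrt ((Real.sqrt (1+β^2) - 1)/2) := by
  set z : ℂ := 1 - β*I with hzdef
  have hre : z.re = 1 := by simp [hzdef]
  have him : z.im = -β := by simp [hzdef]
  have hz : z ≠ 0 := fun h => by simp [h] at hre
  set w : ℂ := z ^ ((1:ℂ)/2) with hwdef
  have hw2 : w * w = z := by
    rw [hwdef, ← Complex.cpow_add _ _ hz]
    norm_num
  have habsz : ‖z‖ = Real.sqrt (1 + β^2) := by
    rw [Complex.norm_def, Complex.normSq_apply, hre, him]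
    ring_nf
  have hsum : w.re^2 + w.im^2 = Real.sqrt (1 + β^2) := by
    have := Complex.sq_norm w
    rw [Complex.normSq_apply] at this
    have h2 : ‖w‖ ^ 2 = ‖z‖ := by
      rw [← this] at *
      calc ‖w‖ ^2 = ‖w * w‖ := by rw [norm_mul]; ring
        _ = ‖z‖ := by rw [hw2]
    rw [← habsz, ← h2, Complex.sq_norm, Complex.normSq_apply]; ring
  have hdiff : w.re^2 - w.im^2 = 1 := by
    have := congrArg Complex.re hw2
    rw [Complex.mul_re, hre] at this
    nlinarith [this]
  have hsq : w.im^2 = (Real.sqrt (1+β^2) - 1)/2 := by linarith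
  have hwim : w.im ≤ 0 := by
    rw [hwdef, Complex.cpow_def_of_ne_zero hz, Complex.exp_im]
    apply mul_nonpos_of_nonneg_of_nonpos (Real.exp_nonneg _)
    apply Real.sin_nonpos_of_nonpos_of_neg_pi_le
    · have harg : z.arg ≤ 0 := by
        rcases eq_or_lt_of_le hβ with h | h
        · have : z.arg = 0 := Complex.arg_eq_zero_iff.mpr ⟨by rw [hre]; norm_num, by rw [him, ← h]; norm_num⟩
          simp [this]
        · exact (Complex.arg_neg_iff.mpr (by rw [him]; linarith)).le
      have : (Complex.log z * ((1:ℂ)/2)).im = z.arg / 2 := by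
        simp [Complex.log_im]
        ring
      rw [this]
      linarith
    · have harg : -π < z.arg := Complex.neg_pi_lt_arg z
      have : (Complex.log z * ((1:ℂ)/2)).im = z.arg / 2 := by
        simp [Complex.log_im]
        ring
      rw [this]
      have : (0:ℝ) < π := Real.pi_pos
      linarith
  have : Real.sqrt (w.im^2) = -w.im := by
    rw [Real.sqrt_sq_eq_abs, abs_of_nonpos hwim]
  rw [hsq] at this
  linarith [this]


-- Step A : sin(βx²)/x² = ∫₀¹ β cos(β t x²) dt
lemma stepA (β x : ℝ) (hx : x ≠ 0) :
    ∫ t in (0:ℝ)..1, β * Real.cos (β*t*x^2) = Real.sin (β*x^2)/x^2 := by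
  have hderiv : ∀ t ∈ Set.uIcc (0:ℝ) 1, HasDerivAt (fun t => Real.sin (β*t*x^2)/x^2)
      (β * Real.cos (β*t*x^2)) t := by
    intro t _
    have h1 : HasDerivAt (fun t : ℝ => β*t*x^2) (β*x^2) t := by
      simpa using ((hasDerivAt_id t).const_mul β).mul_const (x^2)
    have h2 := (Real.hasDerivAt_sin (β*t*x^2)).comp t h1
    have h3 := h2.div_const (x^2)
    refine h3.congr_deriv ?_
    symm
    field_simp
  have hcont : IntervalIntegrable (fun t => β * Real.cos (β*t*x^2)) volume 0 1 := by
    apply Continuous.intervalIntegrable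
    continuity
  have := intervalIntegral.integral_eq_sub_of_hasDerivAt hderiv hcont
  rw [this]
  simp

-- Step C : Gaussian with cosine
lemma stepC (c : ℝ) : ∫ x in Set.Ioi (0:ℝ), Real.exp (-x^2) * Real.cos (c*x^2)
    = ((((π:ℂ)/(1 - c*I)) ^ ((1:ℂ)/2)).re) / 2 := by
  have hb : 0 < ((1:ℂ) - c*I).re := by simp
  have h1 := integral_gaussian_complex_Ioi hb
  have hint : Integrable (fun x : ℝ => Complex.exp (-((1:ℂ)-c*I) * (x:ℂ)^2))
      (volume.restrict (Set.Ioi 0)) := (integrable_cexp_neg_mul_sq hb).restrict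
  have h2 : ∀ x : ℝ, (Complex.exp (-((1:ℂ)-c*I) * (x:ℂ)^2)).re
      = Real.exp (-x^2) * Real.cos (c*x^2) := by
    intro x
    rw [Complex.exp_re]
    congr 2
    · simp [Complex.mul_re, Complex.mul_im, ← Complex.ofReal_pow]
    · simp [Complex.mul_re, Complex.mul_im, ← Complex.ofReal_pow]
  calc ∫ x in Set.Ioi (0:ℝ), Real.exp (-x^2) * Real.cos (c*x^2)
      = ∫ x in Set.Ioi (0:ℝ), (Complex.exp (-((1:ℂ)-c*I) * (x:ℂ)^2)).re := by
        congr 1; ext x; rw [h2]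
    _ = (∫ x in Set.Ioi (0:ℝ), Complex.exp (-((1:ℂ)-c*I) * (x:ℂ)^2)).re :=
        integral_re hint
    _ = ((((π:ℂ)/(1 - c*I)) ^ ((1:ℂ)/2)).re) / 2 := by rw [h1]; simp


lemma piDiv {z : ℂ} (hz : 0 < z.re) :
    ((π:ℂ)/z) ^ ((1:ℂ)/2) = (Real.sqrt π : ℂ) * (z ^ ((1:ℂ)/2))⁻¹ := by
  have hz0 : z ≠ 0 := fun h => by simp [h] at hz
  have harg : z.arg ≠ π := by
    have h := (Complex.abs_arg_le_pi_div_two_iff (z:=z)).mpr hz.le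
    intro hc
    rw [hc] at h
    have := Real.pi_pos
    rw [abs_of_pos this] at h
    linarith
  rw [div_eq_mul_inv, ofReal_mul_cpow Real.pi_pos (inv_ne_zero hz0),
    Complex.inv_cpow _ _ harg]
  congr 1
  rw [show ((1:ℂ)/2) = ((1/2 : ℝ) : ℂ) by norm_num, ← Complex.ofReal_cpow Real.pi_pos.le,
    Real.sqrt_eq_rpow]

lemma stepD (β : ℝ) :
    ∫ t in (0:ℝ)..1, (β:ℂ) * (((1:ℂ) - β*t*I) ^ ((1:ℂ)/2))⁻¹
      = 2*I*(((1:ℂ) - β*I) ^ ((1:ℂ)/2) - 1) := by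
  have hslit : ∀ t : ℝ, ((1:ℂ) - β*t*I) ∈ Complex.slitPlane := by
    intro t
    rw [Complex.mem_slitPlane_iff]
    left; simp
  have hne : ∀ t : ℝ, ((1:ℂ) - β*t*I) ≠ 0 := fun t =>
    Complex.slitPlane_ne_zero (hslit t)
  have hderiv : ∀ t ∈ Set.uIcc (0:ℝ) 1,
      HasDerivAt (fun t : ℝ => 2*I*(((1:ℂ) - β*t*I) ^ ((1:ℂ)/2)))
        ((β:ℂ) * (((1:ℂ) - β*t*I) ^ ((1:ℂ)/2))⁻¹) t := by
    intro t _
    have hf : HasDerivAt (fun z : ℂ => 1 - (β:ℂ)*z*I) (-(β:ℂ)*I) (t:ℂ) := by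
      simpa using (((hasDerivAt_id (t:ℂ)).const_mul (β:ℂ)).mul_const I).const_sub 1
    have h := (hf.cpow_const (c := (1:ℂ)/2) (hslit t)).comp_ofReal
    have h3 := h.const_mul (2*I)
    refine h3.congr_deriv ?_
    symm
    have he : ((1:ℂ)/2 - 1) = -((1:ℂ)/2) := by norm_num
    rw [he, Complex.cpow_neg]
    ring_nf
    rw [Complex.I_sq]
    ring
  have hcont : IntervalIntegrable
      (fun t : ℝ => (β:ℂ) * (((1:ℂ) - β*t*I) ^ ((1:ℂ)/2))⁻¹) volume 0 1 := by
    apply Continuous.intervalIntegrable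
    apply Continuous.mul continuous_const
    apply Continuous.inv₀
    · apply continuous_iff_continuousAt.mpr
      intro t
      exact ContinuousAt.comp (g := fun z : ℂ => z ^ ((1:ℂ)/2))
        (f := fun t : ℝ => (1:ℂ) - β*t*I) (continuousAt_cpow_const (hslit t))
        (by continuity : Continuous (fun t : ℝ => (1:ℂ) - β*t*I)).continuousAt
    · intro t
      simp only [ne_eq, Complex.cpow_eq_zero_iff, not_and_or]
      exact Or.inl (hne t)
  rw [intervalIntegral.integral_eq_sub_of_hasDerivAt hderiv hcont]
  push_cast
  rw [show ((1:ℂ) - β*0*I) = 1 by ring]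
  rw [Complex.one_cpow]
  ring

end Stmt9Aux

open Stmt9Aux in
theorem stmt9 (β : ℝ) (hβ : 0 ≤ β) :
    ∫ x in Set.Ioi (0:ℝ), Real.exp (-x^2) * Real.sin (β * x^2) / x^2
      = Real.sqrt (π/2) * Real.sqrt (Real.sqrt (1 + β^2) - 1) := by
  have hswap_int : Integrable
      (Function.uncurry (fun x t : ℝ => Real.exp (-x^2) * (β * Real.cos (β*t*x^2))))
      ((volume.restrict (Set.Ioi (0:ℝ))).prod (volume.restrict (Set.Ioc (0:ℝ) 1))) := by
    have h1 : Integrable (fun x : ℝ => β * Real.exp (-x^2))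
        (volume.restrict (Set.Ioi (0:ℝ))) := by
      have h : Integrable (fun x : ℝ => Real.exp (-x^2)) := by
        have := integrable_exp_neg_mul_sq (b := 1) one_pos
        simpa using this
      exact (h.const_mul β).restrict
    have h2 : Integrable (fun _ : ℝ => (1:ℝ)) (volume.restrict (Set.Ioc (0:ℝ) 1)) := by
      apply integrable_const
    have hbint := h1.mul_prod h2
    apply hbint.mono'
    · apply Continuous.aestronglyMeasurable
      apply Continuous.mul
      · exact (continuous_neg.comp ((continuous_fst).pow 2)).rexp
      · exact continuous_const.mul (Real.continuous_cos.comp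
          ((continuous_const.mul continuous_snd).mul ((continuous_fst).pow 2)))
    · filter_upwards with p
      simp only [Function.uncurry, norm_mul, mul_one, Real.norm_eq_abs]
      rw [_root_.abs_of_nonneg (Real.exp_nonneg _), _root_.abs_of_nonneg hβ]
      have h3 : |Real.cos (β*p.2*p.1^2)| ≤ 1 := Real.abs_cos_le_one _
      nlinarith [mul_le_mul_of_nonneg_left h3 (mul_nonneg hβ (Real.exp_nonneg (-p.1^2)))]
  have hcontD : Continuous (fun t : ℝ => (β:ℂ) * (((1:ℂ) - β*t*I) ^ ((1:ℂ)/2))⁻¹) := by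
    have hslit : ∀ t : ℝ, ((1:ℂ) - β*t*I) ∈ Complex.slitPlane := by
      intro t; rw [Complex.mem_slitPlane_iff]; left; simp
    apply Continuous.mul continuous_const
    apply Continuous.inv₀
    · apply continuous_iff_continuousAt.mpr
      intro t
      exact ContinuousAt.comp (g := fun z : ℂ => z ^ ((1:ℂ)/2))
        (f := fun t : ℝ => (1:ℂ) - β*t*I) (continuousAt_cpow_const (hslit t))
        (by continuity : Continuous (fun t : ℝ => (1:ℂ) - β*t*I)).continuousAt
    · intro t
      simp only [ne_eq, Complex.cpow_eq_zero_iff, not_and_or]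
      exact Or.inl (Complex.slitPlane_ne_zero (hslit t))
  have hs : (1:ℝ) ≤ Real.sqrt (1 + β^2) := by
    nlinarith [Real.sq_sqrt (show (0:ℝ) ≤ 1+β^2 by positivity),
      Real.sqrt_nonneg (1+β^2)]
  calc ∫ x in Set.Ioi (0:ℝ), Real.exp (-x^2) * Real.sin (β * x^2) / x^2
      = ∫ x in Set.Ioi (0:ℝ), ∫ t in Set.Ioc (0:ℝ) 1,
          Real.exp (-x^2) * (β * Real.cos (β*t*x^2)) := by
        apply setIntegral_congr_fun measurableSet_Ioi
        intro x hx
        dsimp only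
        have hA := stepA β x (ne_of_gt (Set.mem_Ioi.mp hx))
        rw [intervalIntegral.integral_of_le zero_le_one] at hA
        rw [MeasureTheory.integral_const_mul, hA, mul_div_assoc]
    _ = ∫ t in Set.Ioc (0:ℝ) 1, ∫ x in Set.Ioi (0:ℝ),
          Real.exp (-x^2) * (β * Real.cos (β*t*x^2)) :=
        MeasureTheory.integral_integral_swap hswap_int
    _ = ∫ t in Set.Ioc (0:ℝ) 1, ((((Real.sqrt π : ℂ))/2 *
          ((β:ℂ) * (((1:ℂ) - β*t*I) ^ ((1:ℂ)/2))⁻¹)).re) := by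
        apply setIntegral_congr_fun measurableSet_Ioc
        intro t _
        dsimp only
        have h1 : ∫ x in Set.Ioi (0:ℝ), Real.exp (-x^2) * (β * Real.cos (β*t*x^2))
            = β * ∫ x in Set.Ioi (0:ℝ), Real.exp (-x^2) * Real.cos ((β*t)*x^2) := by
          rw [← MeasureTheory.integral_const_mul]
          congr 1; ext x; ring_nf
        rw [h1, stepC (β*t)]
        have hz : 0 < ((1:ℂ) - (β*t)*I).re := by simp
        have h2 := piDiv hz
        push_cast at h2 ⊢
        rw [h2]
        simp [Complex.mul_re, Complex.ofReal_re, Complex.ofReal_im]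
        ring
    _ = (∫ t in Set.Ioc (0:ℝ) 1, ((Real.sqrt π : ℂ))/2 *
          ((β:ℂ) * (((1:ℂ) - β*t*I) ^ ((1:ℂ)/2))⁻¹)).re :=
        integral_re (((continuous_const.mul hcontD : Continuous fun t : ℝ => ((Real.sqrt π : ℂ))/2 * ((β:ℂ) * (((1:ℂ) - β*t*I) ^ ((1:ℂ)/2))⁻¹))).integrableOn_Ioc)
    _ = (((Real.sqrt π : ℂ))/2 * ∫ t in Set.Ioc (0:ℝ) 1,
          ((β:ℂ) * (((1:ℂ) - β*t*I) ^ ((1:ℂ)/2))⁻¹)).re := by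
        rw [MeasureTheory.integral_const_mul]
    _ = (((Real.sqrt π : ℂ))/2 * (2*I*(((1:ℂ) - β*I) ^ ((1:ℂ)/2) - 1))).re := by
        rw [← intervalIntegral.integral_of_le zero_le_one, stepD]
    _ = Real.sqrt π * (- (((1:ℂ) - β*I) ^ ((1:ℂ)/2)).im) := by
        simp [Complex.mul_re, Complex.mul_im]
        ring
    _ = Real.sqrt π * Real.sqrt ((Real.sqrt (1+β^2) - 1)/2) := by
        rw [im_sqrt β hβ]; ring
    _ = Real.sqrt (π/2) * Real.sqrt (Real.sqrt (1 + β^2) - 1) := by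
        rw [← Real.sqrt_mul Real.pi_pos.le, ← Real.sqrt_mul (by positivity : (0:ℝ) ≤ π/2)]
        congr 1
        ring
end

section
/- For every real α ≥ 0, ∫_{0}^{∞} e^{−α x^2} sin(x^2)/x^2 dx = √(π/2) · √(√(α^2 + 1) − α). -/
open Real MeasureTheory Complex Set

lemma cpow_half_unique {z w : ℂ} (hz : 0 < z.re) (hw : w ^ 2 = z) (hwre : 0 < w.re) :
    z ^ (1/2 : ℂ) = w := by
  have hz0 : z ≠ 0 := by
    intro h; rw [h] at hz; simp at hz
  have hvdef : z ^ (1/2 : ℂ) = Complex.exp (Complex.log z * (1/2)) :=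
    Complex.cpow_def_of_ne_zero hz0 _
  have hv2 : (z ^ (1/2 : ℂ)) ^ 2 = z := by
    rw [hvdef, sq, ← Complex.exp_add]
    rw [show Complex.log z * (1/2) + Complex.log z * (1/2) = Complex.log z by ring]
    exact Complex.exp_log hz0
  have harg : |Complex.arg z| < π / 2 :=
    Complex.abs_arg_lt_pi_div_two_iff.mpr (Or.inl hz)
  have hvre : 0 < (z ^ (1/2 : ℂ)).re := by
    rw [hvdef, Complex.exp_re]
    have him : (Complex.log z * (1/2)).im = Complex.arg z / 2 := by
      simp [Complex.log_im]; ring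
    rw [him]
    have hc : 0 < Real.cos (Complex.arg z / 2) := by
      apply Real.cos_pos_of_mem_Ioo
      constructor
      · nlinarith [abs_lt.mp harg, Real.pi_pos]
      · nlinarith [abs_lt.mp harg, Real.pi_pos]
    positivity
  have : (z ^ (1/2 : ℂ) - w) * (z ^ (1/2 : ℂ) + w) = 0 := by
    linear_combination hv2 - hw
  rcases mul_eq_zero.mp this with h | h
  · exact sub_eq_zero.mp h
  · exfalso
    have h2 : z ^ (1/2 : ℂ) = -w := eq_neg_of_add_eq_zero_left h
    have := congrArg Complex.re h2
    simp only [Complex.neg_re] at this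
    linarith

set_option maxHeartbeats 1000000 in
lemma inner_val {α : ℝ} (hα : 0 < α) {t : ℝ} (ht : 0 < t) :
    ∫ x in Ioi (0:ℝ), Real.exp (-α * x^2) * Real.cos (t * x^2)
      = Real.sqrt π * Real.sqrt ((Real.sqrt (α^2+t^2) + α)/2) / (2 * Real.sqrt (α^2+t^2)) := by
  set r := Real.sqrt (α^2+t^2) with hrdef
  set s := Real.sqrt ((r+α)/2) with hsdef
  set u := Real.sqrt ((r-α)/2) with hudef
  have hr2 : r^2 = α^2+t^2 := Real.sq_sqrt (by positivity)
  have hrpos : 0 < r := Real.sqrt_pos.mpr (by positivity)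
  have hrα : α < r := by nlinarith
  have hs2 : s^2 = (r+α)/2 := Real.sq_sqrt (by linarith)
  have hu2 : u^2 = (r-α)/2 := Real.sq_sqrt (by linarith)
  have hspos : 0 < s := Real.sqrt_pos.mpr (by linarith)
  have hupos : 0 < u := Real.sqrt_pos.mpr (by linarith)
  have hsusq : s^2*u^2 = t^2/4 := by
    rw [hs2, hu2]; linear_combination hr2/4
  have hsu : 2*s*u = t := by
    have h5 : (2*s*u - t)*(2*s*u + t) = 0 := by linear_combination 4*hsusq
    rcases mul_eq_zero.mp h5 with h | h
    · linarith
    · nlinarith [mul_pos hspos hupos]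
  set b : ℂ := (α:ℂ) - t*Complex.I with hbdef
  have hbre : 0 < b.re := by simpa [hbdef] using hα
  have hb0 : b ≠ 0 := by
    intro h
    have := congrArg Complex.re h
    simp [hbdef] at this
    linarith
  set w : ℂ := ((Real.sqrt π * s / r : ℝ) : ℂ) + ((Real.sqrt π * u / r : ℝ) : ℂ) * Complex.I
    with hwdef
  have hπ : Real.sqrt π ^ 2 = π := Real.sq_sqrt pi_pos.le
  have hw2 : w ^ 2 = (π : ℂ) / b := by
    rw [eq_div_iff hb0]
    simp only [hwdef, hbdef, Complex.ext_iff, Complex.mul_re, Complex.mul_im, Complex.add_re,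
      Complex.add_im, Complex.sub_re, Complex.sub_im, Complex.ofReal_re, Complex.ofReal_im,
      Complex.I_re, Complex.I_im, pow_two]
    constructor
    · field_simp
      linear_combination (s^2*α - u^2*α + 2*s*u*t)*hπ + π*α*hs2 - π*α*hu2 + π*t*hsu - π*hr2
    · field_simp
      linear_combination (2*s*u*α - (s^2-u^2)*t)*hπ + π*α*hsu - π*t*hs2 + π*t*hu2
  have hwre : 0 < w.re := by
    have : w.re = Real.sqrt π * s / r := by simp [hwdef]
    rw [this]; positivity
  have hzre : 0 < ((π:ℂ)/b).re := by
    rw [← hw2]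
    have : (w^2).re = w.re*w.re - w.im*w.im := by simp [pow_two, Complex.mul_re]
    rw [this]
    have hwim : w.im = Real.sqrt π * u / r := by simp [hwdef]
    have hwr : w.re = Real.sqrt π * s / r := by simp [hwdef]
    rw [hwim, hwr]
    have h1 : Real.sqrt π * s / r * (Real.sqrt π * s / r) - Real.sqrt π * u / r * (Real.sqrt π * u / r) = π * α / r^2 := by
      field_simp
      linear_combination (s^2-u^2)*hπ + π*hs2 - π*hu2
    rw [h1]; positivity
  have hcpow : ((π:ℂ)/b) ^ (1/2:ℂ) = w := cpow_half_unique hzre hw2 hwre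
  have hint : ∫ x in Ioi (0:ℝ), Complex.exp (-b * (x:ℂ)^2) = ((π:ℂ)/b) ^ (1/2:ℂ)/2 :=
    integral_gaussian_complex_Ioi hbre
  have hre : ∀ x : ℝ, Real.exp (-α*x^2) * Real.cos (t*x^2) = (Complex.exp (-b*(x:ℂ)^2)).re := by
    intro x
    rw [Complex.exp_re]
    have h1 : (-b*(x:ℂ)^2).re = -α*x^2 := by
      simp [hbdef, Complex.mul_re, pow_two]
    have h2 : (-b*(x:ℂ)^2).im = t*x^2 := by
      simp [hbdef, Complex.mul_im, pow_two]
    rw [h1, h2]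
  have key : (∫ x in Ioi (0:ℝ), Complex.exp (-b * (x:ℂ)^2)).re
      = Real.sqrt π * s / (2 * r) := by
    rw [hint, hcpow]
    rw [show ((2:ℂ)) = ((2:ℝ):ℂ) from by norm_num, Complex.div_ofReal_re]
    have hwr : w.re = Real.sqrt π * s / r := by simp [hwdef]
    rw [hwr]; ring
  have key2 := _root_.integral_re (μ := volume.restrict (Ioi 0))
    ((integrable_cexp_neg_mul_sq hbre).restrict (s := Ioi 0))
  simp only [RCLike.re_to_complex] at key2
  calc ∫ x in Ioi (0:ℝ), Real.exp (-α * x^2) * Real.cos (t * x^2)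
      = ∫ x in Ioi (0:ℝ), (Complex.exp (-b*(x:ℂ)^2)).re := by
        apply MeasureTheory.integral_congr_ae
        filter_upwards with x using hre x
    _ = (∫ x in Ioi (0:ℝ), Complex.exp (-b*(x:ℂ)^2)).re := key2
    _ = Real.sqrt π * s / (2 * r) := key
    _ = Real.sqrt π * s / (2 * r) := rfl

set_option maxHeartbeats 1000000 in
lemma main_pos {α : ℝ} (hα : 0 < α) :
    ∫ x in Ioi (0:ℝ), Real.exp (-α * x^2) * Real.sin (x^2) / x^2
      = Real.sqrt (π/2) * Real.sqrt (Real.sqrt (α^2 + 1) - α) := by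
  -- Step A: integrand as inner integral
  have hA : ∀ x ∈ Ioi (0:ℝ), Real.exp (-α * x^2) * Real.sin (x^2) / x^2
      = ∫ t in Ioc (0:ℝ) 1, Real.exp (-α*x^2) * Real.cos (t*x^2) := by
    intro x hx
    have hx0 : (0:ℝ) < x := hx
    have hc : x^2 ≠ 0 := by positivity
    rw [MeasureTheory.integral_const_mul]
    rw [← intervalIntegral.integral_of_le zero_le_one]
    rw [intervalIntegral.integral_comp_mul_right Real.cos hc]
    simp [integral_cos, div_eq_mul_inv, mul_comm]
    ring
  rw [MeasureTheory.setIntegral_congr_fun measurableSet_Ioi hA]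
  -- Step B: Fubini
  have hcontf : Continuous fun p : ℝ × ℝ => Real.exp (-α*p.1^2) * Real.cos (p.2*p.1^2) := by
    continuity
  have hInt : Integrable (Function.uncurry fun x t => Real.exp (-α*x^2) * Real.cos (t*x^2))
      ((volume.restrict (Ioi (0:ℝ))).prod (volume.restrict (Ioc (0:ℝ) 1))) := by
    have hm : AEStronglyMeasurable (Function.uncurry fun x t => Real.exp (-α*x^2) * Real.cos (t*x^2))
        ((volume.restrict (Ioi (0:ℝ))).prod (volume.restrict (Ioc (0:ℝ) 1))) :=
      hcontf.aestronglyMeasurable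
    rw [MeasureTheory.integrable_prod_iff hm]
    constructor
    · filter_upwards with x
      exact (Continuous.integrableOn_Ioc (by continuity))
    · apply Integrable.mono' ((integrable_exp_neg_mul_sq hα).restrict (s := Ioi 0))
      · exact (hcontf.norm.aestronglyMeasurable).integral_prod_right'
      · filter_upwards with x
        have h1 : ‖∫ t in Ioc (0:ℝ) 1, ‖Real.exp (-α*x^2) * Real.cos (t*x^2)‖‖
            ≤ Real.exp (-α*x^2) * ((volume.restrict (Ioc (0:ℝ) 1)) Set.univ).toReal := by
          apply MeasureTheory.norm_integral_le_of_norm_le_const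
          filter_upwards with t
          rw [norm_norm, norm_mul]
          have : ‖Real.cos (t*x^2)‖ ≤ 1 := by
            rw [Real.norm_eq_abs]; exact Real.abs_cos_le_one _
          calc ‖Real.exp (-α*x^2)‖ * ‖Real.cos (t*x^2)‖
              ≤ ‖Real.exp (-α*x^2)‖ * 1 := by
                apply mul_le_mul_of_nonneg_left this (norm_nonneg _)
            _ = Real.exp (-α*x^2) := by rw [mul_one, Real.norm_eq_abs, abs_of_pos (Real.exp_pos _)]
        have h2 : ((volume.restrict (Ioc (0:ℝ) 1)) Set.univ).toReal = 1 := by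
          simp [Real.volume_Ioc]
        rw [h2, mul_one] at h1
        exact h1
  rw [MeasureTheory.integral_integral_swap hInt]
  -- Step C: evaluate inner integral
  have hC : ∀ t ∈ Ioc (0:ℝ) 1, (∫ x in Ioi (0:ℝ), Real.exp (-α*x^2) * Real.cos (t*x^2))
      = Real.sqrt π * Real.sqrt ((Real.sqrt (α^2+t^2) + α)/2) / (2 * Real.sqrt (α^2+t^2)) := by
    intro t ht
    exact inner_val hα ht.1
  rw [MeasureTheory.setIntegral_congr_fun measurableSet_Ioc hC]
  -- Step D: FTC
  have hrcont : Continuous fun t : ℝ => Real.sqrt (α^2+t^2) := by continuity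
  have hrpos : ∀ t : ℝ, 0 < Real.sqrt (α^2+t^2) := fun t =>
    Real.sqrt_pos.mpr (by positivity)
  have hFcont : Continuous fun t : ℝ => Real.sqrt π * Real.sqrt ((Real.sqrt (α^2+t^2) - α)/2) := by
    continuity
  have hfcont : Continuous fun t : ℝ =>
      Real.sqrt π * Real.sqrt ((Real.sqrt (α^2+t^2) + α)/2) / (2 * Real.sqrt (α^2+t^2)) := by
    apply Continuous.div (by continuity) (by continuity)
    intro t
    have := hrpos t
    positivity
  have hderiv : ∀ t ∈ Ioo (0:ℝ) 1, HasDerivAt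
      (fun t : ℝ => Real.sqrt π * Real.sqrt ((Real.sqrt (α^2+t^2) - α)/2))
      (Real.sqrt π * Real.sqrt ((Real.sqrt (α^2+t^2) + α)/2) / (2 * Real.sqrt (α^2+t^2))) t := by
    intro t ht
    have ht0 : 0 < t := ht.1
    set r := Real.sqrt (α^2+t^2) with hrdef
    have hr2 : r^2 = α^2+t^2 := Real.sq_sqrt (by positivity)
    have hrp : 0 < r := hrpos t
    have hrα : α < r := by nlinarith
    set s := Real.sqrt ((r+α)/2) with hsdef
    set u := Real.sqrt ((r-α)/2) with hudef
    have hs2 : s^2 = (r+α)/2 := Real.sq_sqrt (by linarith)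
    have hu2 : u^2 = (r-α)/2 := Real.sq_sqrt (by linarith)
    have hspos : 0 < s := Real.sqrt_pos.mpr (by linarith)
    have hupos : 0 < u := Real.sqrt_pos.mpr (by linarith)
    have hsusq : s^2*u^2 = t^2/4 := by
      rw [hs2, hu2]; linear_combination hr2/4
    have hsu : 2*s*u = t := by
      have h5 : (2*s*u - t)*(2*s*u + t) = 0 := by linear_combination 4*hsusq
      rcases mul_eq_zero.mp h5 with h | h
      · linarith
      · nlinarith [mul_pos hspos hupos]
    have h1 : HasDerivAt (fun y : ℝ => α^2 + y^2) (2*t) t := by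
      simpa using (hasDerivAt_pow 2 t).const_add (α^2)
    have h2 : HasDerivAt (fun y : ℝ => Real.sqrt (α^2+y^2)) (1/(2*r) * (2*t)) t := by
      exact (Real.hasDerivAt_sqrt (by positivity)).comp t h1
    have h3 : HasDerivAt (fun y : ℝ => (Real.sqrt (α^2+y^2) - α)/2) (1/(2*r) * (2*t) / 2) t :=
      (h2.sub_const α).div_const 2
    have h4 : HasDerivAt (fun y : ℝ => Real.sqrt ((Real.sqrt (α^2+y^2) - α)/2))
        (1/(2*u) * (1/(2*r) * (2*t) / 2)) t := by
      have hne : (r - α)/2 ≠ 0 := ne_of_gt (by linarith)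
      exact (Real.hasDerivAt_sqrt hne).comp t h3
    have h5 := h4.const_mul (Real.sqrt π)
    refine h5.congr_deriv ?_
    symm
    rw [div_eq_iff (by positivity : (2:ℝ)*r ≠ 0)]
    field_simp
    linear_combination hsu
  rw [← intervalIntegral.integral_of_le zero_le_one]
  have hftc := intervalIntegral.integral_eq_sub_of_hasDeriv_right_of_le zero_le_one
    (hFcont.continuousOn)
    (fun t ht => (hderiv t ht).hasDerivWithinAt)
    ((hfcont.intervalIntegrable 0 1))
  rw [hftc]
  have hR : α ≤ Real.sqrt (α^2+1) := by
    nlinarith [Real.sq_sqrt (by positivity : (0:ℝ) ≤ α^2+1), Real.sqrt_pos.mpr (by positivity : (0:ℝ) < α^2+1)]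
  have h0 : Real.sqrt (α^2 + (0:ℝ)^2) = α := by
    simp [Real.sqrt_sq hα.le]
  rw [h0]
  simp only [one_pow]
  rw [show (α - α)/2 = 0 by ring, Real.sqrt_zero, mul_zero, sub_zero]
  rw [Real.sqrt_div (by linarith : (0:ℝ) ≤ Real.sqrt (α^2+1) - α) 2,
    Real.sqrt_div pi_pos.le 2]
  ring

lemma bound_integrable : IntegrableOn (fun x : ℝ => min 1 (x^2)⁻¹) (Ioi 0) := by
  have hsplit : Ioi (0:ℝ) = Ioc 0 1 ∪ Ioi 1 := (Set.Ioc_union_Ioi_eq_Ioi zero_le_one).symm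
  rw [hsplit]
  have hm : Measurable fun x : ℝ => min 1 (x^2)⁻¹ :=
    measurable_const.min ((measurable_id.pow_const 2).inv)
  apply MeasureTheory.IntegrableOn.union
  · apply Integrable.mono' (integrableOn_const (C := (1:ℝ)) (by simp [Real.volume_Ioc] : volume (Ioc (0:ℝ) 1) ≠ ⊤))
      hm.aestronglyMeasurable.restrict
    filter_upwards with x
    rw [Real.norm_eq_abs, _root_.abs_of_nonneg (le_min zero_le_one (by positivity))]
    exact min_le_left _ _
  · apply Integrable.mono' ((integrableOn_Ioi_rpow_of_lt (by norm_num : (-2:ℝ) < -1) zero_lt_one))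
      hm.aestronglyMeasurable.restrict
    rw [MeasureTheory.ae_restrict_iff' measurableSet_Ioi]
    filter_upwards with x hx
    have hx1 : (1:ℝ) < x := hx
    rw [Real.norm_eq_abs, _root_.abs_of_nonneg (le_min zero_le_one (by positivity))]
    have : x ^ (-2:ℝ) = (x^2)⁻¹ := by
      rw [Real.rpow_neg (by linarith), ← Real.rpow_natCast x 2]
      norm_num
    rw [this]
    exact min_le_right _ _

theorem stmt11 (α : ℝ) (hα : 0 ≤ α) :
    ∫ x in Set.Ioi (0:ℝ), Real.exp (-α * x^2) * Real.sin (x^2) / x^2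
      = Real.sqrt (π/2) * Real.sqrt (Real.sqrt (α^2 + 1) - α) := by
  rcases eq_or_lt_of_le hα with h | h
  · subst h
    set I : ℝ → ℝ := fun a => ∫ x in Ioi (0:ℝ), Real.exp (-a * x^2) * Real.sin (x^2) / x^2
      with hIdef
    set R : ℝ → ℝ := fun a => Real.sqrt (π/2) * Real.sqrt (Real.sqrt (a^2 + 1) - a) with hRdef
    have h1 : Filter.Tendsto I (nhdsWithin 0 (Ioi 0)) (nhds (I 0)) := by
      apply MeasureTheory.tendsto_integral_filter_of_dominated_convergence
        (bound := fun x : ℝ => min 1 (x^2)⁻¹)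
      · filter_upwards with a
        apply Measurable.aestronglyMeasurable
        exact (((measurable_id.pow_const 2).const_mul (-a)).exp.mul
          ((measurable_id.pow_const 2).sin)).div ((measurable_id.pow_const 2))
      · filter_upwards [self_mem_nhdsWithin] with a (ha : 0 < a)
        rw [MeasureTheory.ae_restrict_iff' measurableSet_Ioi]
        filter_upwards with x hx
        have hx0 : 0 < x := hx
        have hexp : Real.exp (-a * x^2) ≤ 1 := by
          rw [Real.exp_le_one_iff]
          nlinarith
        have hsin1 : |Real.sin (x^2)| ≤ 1 := Real.abs_sin_le_one _
        have hsin2 : |Real.sin (x^2)| ≤ x^2 := by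
          have := Real.abs_sin_le_abs (x := x^2)
          rwa [_root_.abs_of_nonneg (by positivity : (0:ℝ) ≤ x^2)] at this
        rw [Real.norm_eq_abs, abs_div, abs_mul, _root_.abs_of_nonneg (Real.exp_pos _).le,
          _root_.abs_of_nonneg (by positivity : (0:ℝ) ≤ x^2)]
        apply le_min
        · calc Real.exp (-a*x^2) * |Real.sin (x^2)| / x^2
              ≤ 1 * (x^2) / x^2 := by
                apply div_le_div_of_nonneg_right ?_ (by positivity)
                  |>.trans_eq rfl
                exact mul_le_mul hexp hsin2 (abs_nonneg _) zero_le_one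
            _ = 1 := by field_simp
        · calc Real.exp (-a*x^2) * |Real.sin (x^2)| / x^2
              ≤ 1 * 1 / x^2 := by
                apply div_le_div_of_nonneg_right ?_ (by positivity)
                  |>.trans_eq rfl
                exact mul_le_mul hexp hsin1 (abs_nonneg _) zero_le_one
            _ = (x^2)⁻¹ := by field_simp
      · exact bound_integrable
      · filter_upwards with x
        have : Continuous fun a : ℝ => Real.exp (-a * x^2) * Real.sin (x^2) / x^2 := by
          continuity
        exact (this.tendsto 0).mono_left nhdsWithin_le_nhds
    have h2 : Filter.Tendsto R (nhdsWithin 0 (Ioi 0)) (nhds (R 0)) := by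
      have : Continuous R := by
        rw [hRdef]
        continuity
      exact (this.tendsto 0).mono_left nhdsWithin_le_nhds
    have h3 : I =ᶠ[nhdsWithin 0 (Ioi 0)] R := by
      filter_upwards [self_mem_nhdsWithin] with a (ha : 0 < a)
      exact main_pos ha
    have h4 : Filter.Tendsto R (nhdsWithin 0 (Ioi 0)) (nhds (I 0)) := h1.congr' h3
    have h5 : I 0 = R 0 := tendsto_nhds_unique h4 h2
    exact h5
  · exact main_pos h
end

section
/- The improper integral ∫_{−∞}^{∞} sin(x^2)/x^2 dx equals √(2π). -/
open Real MeasureTheory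
open Set Filter Complex

-- Lemma A: Laplace of 1
lemma lemA {b : ℝ} (hb : 0 < b) : ∫ t in Ioi (0:ℝ), Real.exp (-(b*t)) = 1/b := by
  have := MeasureTheory.integral_comp_mul_left_Ioi (fun u => Real.exp (-u)) 0 hb
  simp only [mul_zero] at this
  rw [this, integral_exp_neg_Ioi_zero, smul_eq_mul, mul_one, one_div]

-- exp(-w/2) integral
lemma lemE2 : ∫ w in Ioi (0:ℝ), Real.exp (-(2⁻¹*w)) = 2 := by
  have := lemA (b := 2⁻¹) (by norm_num)
  rw [this]; norm_num

-- image of Ioi 0 under sinh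
lemma sinh_image : Real.sinh '' Ioi (0:ℝ) = Ioi 0 := by
  ext y
  constructor
  · rintro ⟨x, hx, rfl⟩; exact Real.sinh_pos_iff.mpr hx
  · intro hy
    exact ⟨Real.arsinh y, Real.arsinh_pos_iff.mpr hy, Real.sinh_arsinh y⟩

-- Lemma F core: substitution
lemma lemF : ∫ t in Ioi (0:ℝ), Real.sqrt (Real.sqrt (t^2+1) - t) / Real.sqrt (t^2+1) = 2 := by
  have hs : MeasurableSet (Ioi (0:ℝ)) := measurableSet_Ioi
  have hderiv : ∀ x ∈ Ioi (0:ℝ), HasDerivWithinAt Real.sinh (Real.cosh x) (Ioi 0) x :=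
    fun x _ => (Real.hasDerivAt_sinh x).hasDerivWithinAt
  have hinj : InjOn Real.sinh (Ioi 0) := Real.sinh_injective.injOn
  have key := MeasureTheory.integral_image_eq_integral_abs_deriv_smul hs hderiv hinj
    (fun t => Real.sqrt (Real.sqrt (t^2+1) - t) / Real.sqrt (t^2+1))
  rw [sinh_image] at key
  rw [key]
  have : ∀ x ∈ Ioi (0:ℝ), |Real.cosh x| •
      (Real.sqrt (Real.sqrt (Real.sinh x ^2+1) - Real.sinh x) / Real.sqrt (Real.sinh x^2+1))
      = Real.exp (-(2⁻¹*x)) := by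
    intro x _
    have hc : Real.sqrt (Real.sinh x ^ 2 + 1) = Real.cosh x := by
      rw [← Real.cosh_sq]
      exact Real.sqrt_sq (Real.cosh_pos x).le
    rw [hc, abs_of_pos (Real.cosh_pos x), smul_eq_mul,
      mul_div_cancel₀ _ (Real.cosh_pos x).ne', Real.cosh_sub_sinh]
    rw [show -x = -(2⁻¹*x) + -(2⁻¹*x) by ring, Real.exp_add]
    rw [Real.sqrt_mul_self (Real.exp_nonneg _)]
  rw [setIntegral_congr_fun hs this, lemE2]

lemma lemB {t : ℝ} (ht : 0 < t) :
    ((π:ℂ)/((t:ℂ) - Complex.I)) ^ (1/2 : ℂ) =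
      (↑(Real.sqrt (π*(Real.sqrt (t^2+1)+t))/(Real.sqrt 2*Real.sqrt (t^2+1))) : ℂ) +
      (↑(Real.sqrt (π*(Real.sqrt (t^2+1)-t))/(Real.sqrt 2*Real.sqrt (t^2+1))) : ℂ) * Complex.I := by
  set s : ℝ := Real.sqrt (t^2+1) with hs
  have hs2 : s^2 = t^2+1 := Real.sq_sqrt (by positivity)
  have hspos : 0 < s := Real.sqrt_pos.mpr (by positivity)
  have hst : t < s := by
    nlinarith [hs2, hspos]
  set c : ℝ := Real.sqrt (π*(s+t))/(Real.sqrt 2*s) with hcdef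
  set d : ℝ := Real.sqrt (π*(s-t))/(Real.sqrt 2*s) with hddef
  have hcpos : 0 < c := by
    apply div_pos (Real.sqrt_pos.mpr (by positivity)) (by positivity)
  have hsq2 : (Real.sqrt 2 * s)^2 = 2*s^2 := by
    rw [mul_pow, Real.sq_sqrt (by norm_num : (2:ℝ) ≥ 0)]
  have hc2 : c^2 = π*(s+t)/(2*s^2) := by
    rw [hcdef, div_pow, Real.sq_sqrt (by positivity), hsq2]
  have hd2 : d^2 = π*(s-t)/(2*s^2) := by
    rw [hddef, div_pow, Real.sq_sqrt (by nlinarith [Real.pi_pos]), hsq2]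
  have hcd : c*d = π/(2*s^2) := by
    rw [hcdef, hddef, div_mul_div_comm, ← Real.sqrt_mul (by positivity),
      show π*(s+t)*(π*(s-t)) = π^2*(s^2-t^2) by ring, hs2,
      show t^2+1-t^2 = 1 by ring, mul_one, Real.sqrt_sq Real.pi_pos.le]
    have h22 : Real.sqrt 2*s*(Real.sqrt 2*s) = 2*(t^2+1) := by nlinarith [hsq2, hs2]
    rw [h22]
  have hb0 : (t:ℂ) - Complex.I ≠ 0 := by
    intro h
    have := congrArg Complex.re h
    simp at this; linarith
  set z : ℂ := (c:ℂ) + (d:ℂ)*Complex.I with hzdef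
  have hzz : z^2 = ((π/(t^2+1) : ℝ):ℂ) * ((t:ℂ) + Complex.I) := by
    have h1 : c^2 - d^2 = π*t/(t^2+1) := by
      rw [hc2, hd2, hs2]; field_simp; ring
    have h2 : 2*(c*d) = π/(t^2+1) := by
      rw [hcd, hs2]; field_simp
    apply Complex.ext <;>
      simp [hzdef, pow_two, Complex.mul_re, Complex.mul_im, -Complex.ofReal_div] <;>
      first | linear_combination h1 | linear_combination h2
  have hz2 : z^2 = (π:ℂ)/((t:ℂ) - Complex.I) := by
    rw [hzz, eq_div_iff hb0, mul_assoc]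
    have hti : ((t:ℂ)+Complex.I)*((t:ℂ)-Complex.I) = ((t^2+1 : ℝ):ℂ) := by
      have := Complex.I_sq
      push_cast
      linear_combination -this
    rw [hti, ← Complex.ofReal_mul]
    norm_cast
    field_simp
  have hx0 : (π:ℂ)/((t:ℂ) - Complex.I) ≠ 0 :=
    div_ne_zero (by exact_mod_cast Real.pi_ne_zero) hb0
  set w := ((π:ℂ)/((t:ℂ) - Complex.I)) ^ (1/2 : ℂ) with hwdef
  have hw2 : w^2 = (π:ℂ)/((t:ℂ)-Complex.I) := by
    rw [hwdef, show (1/2 : ℂ) = (((2:ℕ)):ℂ)⁻¹ by norm_num]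
    exact Complex.cpow_nat_inv_pow _ two_ne_zero
  have hrew : 0 ≤ w.re := by
    rw [hwdef, Complex.cpow_def_of_ne_zero hx0, Complex.exp_re]
    apply mul_nonneg (Real.exp_nonneg _)
    have him : (Complex.log ((π:ℂ)/((t:ℂ)-Complex.I)) * (1/2 : ℂ)).im
        = Complex.arg ((π:ℂ)/((t:ℂ)-Complex.I)) / 2 := by
      simp [Complex.mul_im, Complex.log_im]
      ring
    rw [him]
    refine Real.cos_nonneg_of_mem_Icc ⟨?_, ?_⟩
    · linarith [Complex.neg_pi_lt_arg ((π:ℂ)/((t:ℂ)-Complex.I))]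
    · linarith [Complex.arg_le_pi ((π:ℂ)/((t:ℂ)-Complex.I))]
  have hcases : w = z ∨ w = -z := by
    have hd0 : (w - z)*(w + z) = 0 := by
      linear_combination hw2 - hz2
    rcases mul_eq_zero.mp hd0 with h'|h'
    · exact Or.inl (sub_eq_zero.mp h')
    · exact Or.inr (eq_neg_of_add_eq_zero_left h')
  rcases hcases with h|h
  · exact h
  · exfalso
    have hre : w.re = -c := by rw [h]; simp [hzdef]
    rw [hre] at hrew
    linarith

lemma lemC {t : ℝ} (ht : 0 < t) :
    ∫ x in Set.Ioi (0:ℝ), Real.exp (-(t*x^2)) * Real.sin (x^2)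
      = Real.sqrt (π*(Real.sqrt (t^2+1)-t))/(Real.sqrt 2*Real.sqrt (t^2+1)) / 2 := by
  have hb : 0 < ((t:ℂ) - Complex.I).re := by simpa using ht
  have key := congrArg Complex.im (integral_gaussian_complex_Ioi hb)
  have hcim : Complex.im = RCLike.im := rfl
  rw [hcim, ← integral_im (integrable_cexp_neg_mul_sq hb).integrableOn, ← hcim] at key
  rw [lemB ht] at key
  simp [← Complex.ofReal_mul, ← Complex.ofReal_div] at key
  rw [← key]
  apply setIntegral_congr_fun measurableSet_Ioi
  intro x _
  show Real.exp (-(t*x^2)) * Real.sin (x^2) = (Complex.exp ((Complex.I - (t:ℂ)) * (x:ℂ)^2)).im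
  rw [Complex.exp_im]
  have hre : ((Complex.I - (t:ℂ)) * (x:ℂ)^2).re = -(t*x^2) := by
    simp [Complex.mul_re, ← Complex.ofReal_pow]
  have him : ((Complex.I - (t:ℂ)) * (x:ℂ)^2).im = x^2 := by
    simp [Complex.mul_im, ← Complex.ofReal_pow]
  rw [hre, him]

lemma abs_sin_le_self {y : ℝ} (hy : 0 ≤ y) : |Real.sin y| ≤ y := by
  rcases eq_or_lt_of_le hy with h|h
  · simp [← h]
  rcases le_or_gt 1 y with h1|h1
  · exact le_trans (Real.abs_sin_le_one y) h1
  · rw [abs_of_pos (Real.sin_pos_of_pos_of_lt_pi h (lt_trans h1 (by linarith [Real.pi_gt_three])))]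
    exact (Real.sin_lt h).le

-- master integrability bound on Ioi 0
lemma master_int {g : ℝ → ℝ} (hm : AEStronglyMeasurable g (volume.restrict (Ioi (0:ℝ))))
    (hb : ∀ x ∈ Ioi (0:ℝ), ‖g x‖ ≤ min 1 (x^2)⁻¹) : IntegrableOn g (Ioi (0:ℝ)) := by
  have hsplit : Ioi (0:ℝ) = Ioc (0:ℝ) 1 ∪ Ioi 1 := (Ioc_union_Ioi_eq_Ioi zero_le_one).symm
  rw [hsplit]
  apply IntegrableOn.union
  · refine Integrable.mono' (integrable_const 1) (hm.mono_set (by rw [hsplit]; exact subset_union_left)) ?_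
    rw [ae_restrict_iff' measurableSet_Ioc]
    filter_upwards with x hx
    exact le_trans (hb x (mem_Ioi.mpr hx.1)) (min_le_left _ _)
  · refine Integrable.mono' (integrableOn_Ioi_rpow_of_lt (by norm_num : (-2:ℝ) < -1) one_pos)
      (hm.mono_set (by rw [hsplit]; exact subset_union_right)) ?_
    rw [ae_restrict_iff' measurableSet_Ioi]
    filter_upwards with x hx
    have hx0 : (0:ℝ) < x := lt_trans one_pos hx
    have : x ^ (-2:ℝ) = (x^2)⁻¹ := by
      rw [Real.rpow_neg hx0.le, show ((2:ℝ)) = ((2:ℕ):ℝ) by norm_num, Real.rpow_natCast]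
    rw [this]
    exact le_trans (hb x (mem_Ioi.mpr hx0)) (min_le_right _ _)

lemma hmeas_unc : AEStronglyMeasurable
    (Function.uncurry fun x t => Real.sin (x^2) * Real.exp (-(x^2*t)))
    ((volume.restrict (Ioi (0:ℝ))).prod (volume.restrict (Ioi (0:ℝ)))) := by
  apply Continuous.aestronglyMeasurable
  unfold Function.uncurry
  fun_prop

lemma fub : Integrable (Function.uncurry fun x t => Real.sin (x^2) * Real.exp (-(x^2*t)))
    ((volume.restrict (Ioi (0:ℝ))).prod (volume.restrict (Ioi (0:ℝ)))) := by
  rw [MeasureTheory.integrable_prod_iff hmeas_unc]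
  constructor
  · rw [ae_restrict_iff' measurableSet_Ioi]
    filter_upwards with x hx
    have hx2 : (0:ℝ) < x^2 := pow_pos hx 2
    have : IntegrableOn (fun t => Real.exp (-(x^2*t))) (Ioi (0:ℝ)) := by
      simpa [neg_mul] using exp_neg_integrableOn_Ioi 0 hx2
    simpa [Function.uncurry] using this.const_mul (Real.sin (x^2))
  · apply master_int
    · exact hmeas_unc.norm.integral_prod_right'
    · intro x hx
      have hx2 : (0:ℝ) < x^2 := pow_pos hx 2
      have hval : ∫ t in Ioi (0:ℝ), ‖Real.sin (x^2) * Real.exp (-(x^2*t))‖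
          = |Real.sin (x^2)| * (x^2)⁻¹ := by
        simp_rw [norm_mul, Real.norm_eq_abs, Real.abs_exp]
        rw [integral_const_mul, lemA hx2, one_div]
      have hnn : (0:ℝ) ≤ ∫ t in Ioi (0:ℝ), ‖Real.sin (x^2) * Real.exp (-(x^2*t))‖ :=
        integral_nonneg (fun t => norm_nonneg _)
      show ‖∫ t in Ioi (0:ℝ), ‖Real.sin (x^2) * Real.exp (-(x^2*t))‖‖ ≤ _
      rw [Real.norm_eq_abs, _root_.abs_of_nonneg hnn, hval]
      apply le_min
      · calc |Real.sin (x^2)| * (x^2)⁻¹ ≤ x^2 * (x^2)⁻¹ :=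
              mul_le_mul_of_nonneg_right (abs_sin_le_self hx2.le) (by positivity)
          _ = 1 := mul_inv_cancel₀ hx2.ne'
      · calc |Real.sin (x^2)| * (x^2)⁻¹ ≤ 1 * (x^2)⁻¹ :=
              mul_le_mul_of_nonneg_right (Real.abs_sin_le_one _) (by positivity)
          _ = (x^2)⁻¹ := one_mul _

theorem stmt12 : ∫ x : ℝ, Real.sin (x^2) / x^2 = Real.sqrt (2 * π) := by
  have heven : (∫ x : ℝ, Real.sin (x^2) / x^2)
      = ∫ x : ℝ, (fun y : ℝ => Real.sin (y^2) / y^2) |x| := by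
    congr 1; funext x; simp [sq_abs]
  rw [heven, integral_comp_abs (f := fun y : ℝ => Real.sin (y^2) / y^2)]
  have h1 : ∫ x in Ioi (0:ℝ), Real.sin (x^2)/x^2
      = ∫ x in Ioi (0:ℝ), ∫ t in Ioi (0:ℝ), Real.sin (x^2) * Real.exp (-(x^2*t)) := by
    apply setIntegral_congr_fun measurableSet_Ioi
    intro x hx
    have hx2 : (0:ℝ) < x^2 := pow_pos hx 2
    show Real.sin (x^2)/x^2 = ∫ t in Ioi (0:ℝ), Real.sin (x^2) * Real.exp (-(x^2*t))
    rw [integral_const_mul, lemA hx2, mul_one_div]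
  have h2 := integral_integral_swap fub
  have h3 : ∫ t in Ioi (0:ℝ), ∫ x in Ioi (0:ℝ), Real.sin (x^2) * Real.exp (-(x^2*t))
      = ∫ t in Ioi (0:ℝ),
          Real.sqrt (π*(Real.sqrt (t^2+1)-t))/(Real.sqrt 2*Real.sqrt (t^2+1))/2 := by
    apply setIntegral_congr_fun measurableSet_Ioi
    intro t ht
    beta_reduce
    rw [← lemC ht]
    apply setIntegral_congr_fun measurableSet_Ioi
    intro x hx
    show Real.sin (x^2) * Real.exp (-(x^2*t)) = Real.exp (-(t*x^2)) * Real.sin (x^2)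
    rw [mul_comm (x^2) t, mul_comm]
  have h4 : ∫ t in Ioi (0:ℝ),
        Real.sqrt (π*(Real.sqrt (t^2+1)-t))/(Real.sqrt 2*Real.sqrt (t^2+1))/2
      = Real.sqrt (2*π)/2 := by
    have hptw : ∀ t ∈ Ioi (0:ℝ),
        Real.sqrt (π*(Real.sqrt (t^2+1)-t))/(Real.sqrt 2*Real.sqrt (t^2+1))/2
        = (Real.sqrt π/(2*Real.sqrt 2)) *
          (Real.sqrt (Real.sqrt (t^2+1)-t)/Real.sqrt (t^2+1)) := by
      intro t ht
      have hs0 : Real.sqrt (t^2+1) ≠ 0 := (Real.sqrt_pos.mpr (by positivity)).ne'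
      have h20 : Real.sqrt 2 ≠ 0 := (Real.sqrt_pos.mpr (by norm_num)).ne'
      rw [Real.sqrt_mul Real.pi_pos.le]
      field_simp
    rw [setIntegral_congr_fun measurableSet_Ioi hptw, integral_const_mul, lemF]
    have h2' : Real.sqrt 2 * Real.sqrt 2 = 2 := Real.mul_self_sqrt (by norm_num)
    have h20 : Real.sqrt 2 ≠ 0 := (Real.sqrt_pos.mpr (by norm_num)).ne'
    rw [Real.sqrt_mul (by norm_num : (0:ℝ) ≤ 2) π]
    field_simp
    nlinarith [h2', Real.sqrt_nonneg π]
  rw [h1, h2, h3, h4]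
  ring
end

section
/- For every real α with 0 ≤ α < 1, ∫_{−π/2}^{π/2} ln(1 + α sin φ) dφ = π ln((1 + √(1 − α^2))/2). -/
open Real intervalIntegral

noncomputable def Ifun (β : ℝ) : ℝ := ∫ φ in (0:ℝ)..π, Real.log (1 + β^2 + 2*β*Real.cos φ)

lemma arg_pos {β : ℝ} (hβ : |β| < 1) (φ : ℝ) : 0 < 1 + β^2 + 2*β*Real.cos φ := by
  have h3 : |β * Real.cos φ| ≤ |β| := by
    rw [abs_mul]; exact mul_le_of_le_one_right (abs_nonneg _) (Real.abs_cos_le_one φ)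
  have h4 := (abs_le.1 h3).1
  have h5 := abs_nonneg β
  nlinarith [sq_abs β]

lemma cont_g {β : ℝ} (hβ : |β| < 1) :
    Continuous fun φ => Real.log (1 + β^2 + 2*β*Real.cos φ) := by
  apply Continuous.log
  · fun_prop
  · exact fun φ => (arg_pos hβ φ).ne'

lemma Ifun_neg (β : ℝ) : Ifun (-β) = Ifun β := by
  unfold Ifun
  have h : ∀ φ : ℝ, 1 + (-β)^2 + 2*(-β)*Real.cos φ = 1 + β^2 + 2*β*Real.cos (π - φ) := by
    intro φ; rw [Real.cos_pi_sub]; ring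
  simp_rw [h]
  rw [intervalIntegral.integral_comp_sub_left (fun u => Real.log (1 + β^2 + 2*β*Real.cos u)) π]
  rw [sub_self, sub_zero]

lemma Ifun_double {β : ℝ} (hβ : |β| < 1) : Ifun (β^2) = 2 * Ifun β := by
  have hβ2 : |(-(β^2) : ℝ)| < 1 := by
    rw [abs_neg, abs_of_nonneg (sq_nonneg β)]
    calc β^2 = |β|^2 := (sq_abs β).symm
    _ < 1 := by nlinarith [abs_nonneg β]
  have hint : ∀ γ : ℝ, |γ| < 1 → IntervalIntegrable
      (fun φ => Real.log (1 + γ^2 + 2*γ*Real.cos φ)) MeasureTheory.volume 0 π :=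
    fun γ hγ => (cont_g hγ).intervalIntegrable 0 π
  have step1 : 2 * Ifun β = ∫ φ in (0:ℝ)..π,
      (Real.log (1 + β^2 + 2*β*Real.cos φ) + Real.log (1 + β^2 - 2*β*Real.cos φ)) := by
    rw [two_mul]
    nth_rewrite 2 [← Ifun_neg β]
    unfold Ifun
    rw [← intervalIntegral.integral_add (hint β hβ) (by simpa using hint (-β) (by simpa using hβ))]
    congr 1; funext φ; ring_nf
  have step2 : ∀ φ : ℝ, Real.log (1 + β^2 + 2*β*Real.cos φ) + Real.log (1 + β^2 - 2*β*Real.cos φ)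
      = Real.log (1 + (-(β^2))^2 + 2*(-(β^2))*Real.cos (2*φ)) := by
    intro φ
    rw [← Real.log_mul (arg_pos hβ φ).ne' (by have := arg_pos (β := -β) (by simpa using hβ) φ; nlinarith)]
    congr 1
    rw [Real.cos_two_mul]
    ring
  have step3 : (∫ φ in (0:ℝ)..π, Real.log (1 + (-(β^2))^2 + 2*(-(β^2))*Real.cos (2*φ)))
      = 2⁻¹ * ∫ u in (0:ℝ)..(2*π), Real.log (1 + (-(β^2))^2 + 2*(-(β^2))*Real.cos u) := by
    rw [intervalIntegral.integral_comp_mul_left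
      (fun u => Real.log (1 + (-(β^2))^2 + 2*(-(β^2))*Real.cos u)) two_ne_zero]
    norm_num
  have step4 : (∫ u in π..(2*π), Real.log (1 + (-(β^2))^2 + 2*(-(β^2))*Real.cos u))
      = Ifun (-(β^2)) := by
    unfold Ifun
    have h : ∀ x : ℝ, Real.cos (2*π - x) = Real.cos x := by
      intro x; rw [Real.cos_sub]; simp [Real.cos_two_pi, Real.sin_two_pi]
    have := intervalIntegral.integral_comp_sub_left
      (fun u => Real.log (1 + (-(β^2))^2 + 2*(-(β^2))*Real.cos u)) (2*π) (a := 0) (b := π)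
    simp only [h] at this
    have hb : 2*π - π = π := by ring
    rw [hb, sub_zero] at this
    exact this.symm
  have split : (∫ u in (0:ℝ)..(2*π), Real.log (1 + (-(β^2))^2 + 2*(-(β^2))*Real.cos u))
      = Ifun (-(β^2)) + Ifun (-(β^2)) := by
    rw [← intervalIntegral.integral_add_adjacent_intervals (a := 0) (b := π) (c := 2*π)
      (hint _ hβ2) ?_]
    · rw [step4]; rfl
    · apply (cont_g hβ2).intervalIntegrable
  rw [step1]
  simp_rw [step2]
  rw [step3, split, ← Ifun_neg (β^2)]
  ring

lemma Ifun_iter {β : ℝ} (h0 : 0 ≤ β) (h1 : β < 1) (n : ℕ) :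
    Ifun (β^(2^n)) = 2^n * Ifun β := by
  induction n with
  | zero => simp
  | succ n ih =>
    have habs : |β^(2^n)| < 1 := by
      rw [abs_of_nonneg (pow_nonneg h0 _)]
      exact pow_lt_one₀ h0 h1 (by positivity)
    have : β^(2^(n+1)) = (β^(2^n))^2 := by
      rw [← pow_mul, pow_succ]
    rw [this, Ifun_double habs, ih, pow_succ]
    ring

lemma Ifun_bound {β γ : ℝ} (hγ0 : 0 ≤ γ) (hγβ : γ ≤ β) (hβ : β < 1) :
    |Ifun γ| ≤ π * (Real.log 4 - Real.log ((1-β)^2)) := by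
  set C := Real.log 4 - Real.log ((1-β)^2) with hC
  have hβpos : 0 < 1 - β := by linarith
  have hlog1 : Real.log ((1-β)^2) ≤ 0 := by
    apply Real.log_nonpos (by positivity)
    nlinarith
  have hlog4 : 0 ≤ Real.log 4 := Real.log_nonneg (by norm_num)
  have key : ∀ φ ∈ Set.uIoc (0:ℝ) π, ‖Real.log (1 + γ^2 + 2*γ*Real.cos φ)‖ ≤ C := by
    intro φ _
    have hc1 := Real.neg_one_le_cos φ
    have hc2 := Real.cos_le_one φ
    have hlb : (1-β)^2 ≤ 1 + γ^2 + 2*γ*Real.cos φ := by nlinarith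
    have hub : 1 + γ^2 + 2*γ*Real.cos φ ≤ 4 := by nlinarith
    have hpos : (0:ℝ) < (1-β)^2 := by positivity
    rw [Real.norm_eq_abs, abs_le]
    constructor
    · have h2 := Real.log_le_log hpos hlb
      linarith
    · have h2 := Real.log_le_log (by linarith) hub
      linarith
  have := intervalIntegral.norm_integral_le_of_norm_le_const key
  rw [Real.norm_eq_abs] at this
  calc |Ifun γ| ≤ C * |π - 0| := this
  _ = π * C := by rw [sub_zero, abs_of_nonneg Real.pi_nonneg]; ring

lemma Ifun_zero {β : ℝ} (h0 : 0 ≤ β) (h1 : β < 1) : Ifun β = 0 := by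
  set C := Real.log 4 - Real.log ((1-β)^2) with hC
  have hn : ∀ n : ℕ, |Ifun β| ≤ π * C / 2^n := by
    intro n
    have hb : |Ifun (β^(2^n))| ≤ π * C := by
      apply Ifun_bound (pow_nonneg h0 _) _ h1
      calc β^(2^n) ≤ β^1 := pow_le_pow_of_le_one h0 h1.le (Nat.one_le_two_pow)
      _ = β := pow_one β
    rw [Ifun_iter h0 h1 n, abs_mul, abs_of_nonneg (by positivity : (0:ℝ) ≤ 2^n)] at hb
    rw [le_div_iff₀ (by positivity)]
    linarith [hb]
  have htend : Filter.Tendsto (fun n : ℕ => π * C / 2^n) Filter.atTop (nhds 0) := by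
    simp_rw [div_eq_mul_inv, ← inv_pow]
    have := (tendsto_pow_atTop_nhds_zero_of_lt_one (by norm_num : (0:ℝ) ≤ 2⁻¹)
      (by norm_num : (2:ℝ)⁻¹ < 1)).const_mul (π * C)
    simpa using this
  have : |Ifun β| ≤ 0 := ge_of_tendsto' htend hn
  exact abs_eq_zero.1 (le_antisymm this (abs_nonneg _))

theorem stmt14 (α : ℝ) (h0 : 0 ≤ α) (h1 : α < 1) :
    ∫ φ in (-(π/2))..(π/2), Real.log (1 + α * Real.sin φ)
      = π * Real.log ((1 + Real.sqrt (1 - α^2)) / 2) := by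
  set s := Real.sqrt (1 - α^2) with hsdef
  have hα2 : 0 < 1 - α^2 := by nlinarith
  have hs2 : s^2 = 1 - α^2 := Real.sq_sqrt hα2.le
  have hs0 : 0 < s := Real.sqrt_pos.2 hα2
  set β := α / (1 + s) with hβdef
  have h1s : 0 < 1 + s := by linarith
  have hβ0 : 0 ≤ β := div_nonneg h0 h1s.le
  have hβ1 : β < 1 := by
    rw [hβdef, div_lt_one h1s]; linarith
  have habs : |β| < 1 := by rw [abs_of_nonneg hβ0]; exact hβ1
  have halg : α * (1 + β^2) = 2 * β := by
    rw [hβdef]; field_simp; linear_combination (α + α*s - α*s) * hs2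
  have h1β : (0:ℝ) < 1 + β^2 := by positivity
  -- Step 1: reduce to cosine integral
  have step1 : (∫ φ in (-(π/2))..(π/2), Real.log (1 + α * Real.sin φ))
      = ∫ φ in (0:ℝ)..π, Real.log (1 + α * Real.cos φ) := by
    have := intervalIntegral.integral_comp_sub_left
      (fun u => Real.log (1 + α * Real.sin u)) (π/2) (a := 0) (b := π)
    simp only [Real.sin_pi_div_two_sub] at this
    have hb1 : π/2 - π = -(π/2) := by ring
    have hb2 : π/2 - 0 = π/2 := by ring
    rw [hb1, hb2] at this
    exact this.symm
  -- Step 2: pointwise decomposition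
  have step2 : ∀ φ : ℝ, Real.log (1 + α * Real.cos φ)
      = Real.log (1 + β^2 + 2*β*Real.cos φ) - Real.log (1 + β^2) := by
    intro φ
    rw [← Real.log_div (arg_pos habs φ).ne' h1β.ne']
    congr 1
    field_simp
    linear_combination Real.cos φ * halg
  have hintc : IntervalIntegrable (fun _ : ℝ => Real.log (1 + β^2))
      MeasureTheory.volume 0 π := intervalIntegrable_const
  have step3 : (∫ φ in (0:ℝ)..π, Real.log (1 + α * Real.cos φ))
      = Ifun β - π * Real.log (1 + β^2) := by
    simp_rw [step2]
    rw [intervalIntegral.integral_sub ((cont_g habs).intervalIntegrable 0 π) hintc,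
      intervalIntegral.integral_const]
    unfold Ifun
    rw [sub_zero, smul_eq_mul]
  have h2 : (1 + β^2) * (1 + s) = 2 := by
    rw [hβdef]; field_simp; linear_combination (1 + s - s) * hs2
  have hfinal : (1 + s)/2 = (1 + β^2)⁻¹ := by
    rw [inv_eq_one_div, div_eq_div_iff (by norm_num : (2:ℝ) ≠ 0) h1β.ne']
    linarith [h2]
  rw [step1, step3, Ifun_zero hβ0 hβ1, zero_sub, hfinal, Real.log_inv]
  ring
end
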